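/- arXiv:2506.19411 — 4 statements merged into one kernel-verified Lean document; each statement's English description precedes it below -/
import Mathlib

section
/- Let K be a nonarchimedean valued field of mixed characteristic (0,p), with absolute value |·|. Let x_1,…,x_m ∈ K be images of rational numbers (under the embedding ℚ → K), let c ∈ O_K, and let N be a positive integer. Assume that |x_i - x_j| ≥ |p^N|·|x_i - c| and |x_i - c| = |x_j - c| for all i ≠ j. Then m ≤ p^{N+1}. -/
section Aux

variable {K : Type*} [NormedField K] [CharZero K]

private lemma aux_nat_le_one (hna : ∀ x y : K, ‖x + y‖ ≤ max ‖x‖ ‖y‖) (n : ℕ) :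
    ‖(n : K)‖ ≤ 1 := by
  induction n with
  | zero => simp
  | succ k ih =>
      push_cast
      exact le_trans (hna k 1) (by simp [ih])

private lemma aux_int_le_one (hna : ∀ x y : K, ‖x + y‖ ≤ max ‖x‖ ‖y‖) (n : ℤ) :
    ‖(n : K)‖ ≤ 1 := by
  have h := aux_nat_le_one hna n.natAbs
  rcases n.natAbs_eq with h' | h'
  · rw [h', Int.cast_natCast]; exact h
  · rw [h', Int.cast_neg, norm_neg, Int.cast_natCast]; exact h

private lemma aux_unit_norm (hna : ∀ x y : K, ‖x + y‖ ≤ max ‖x‖ ‖y‖)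
    (p : ℕ) (hp : p.Prime) (hpv : ‖(p : K)‖ < 1)
    (n : ℤ) (hn : ¬ (p : ℤ) ∣ n) : ‖(n : K)‖ = 1 := by
  refine le_antisymm (aux_int_le_one hna n) ?_
  by_contra h
  push_neg at h
  have hcop : IsCoprime ((p : ℤ)) n := by
    rw [Int.isCoprime_iff_gcd_eq_one]
    have hnd : ¬ p ∣ n.natAbs := by
      intro hd
      exact hn (Int.dvd_natAbs.mp (Int.natCast_dvd_natCast.mpr hd))
    simpa [Int.gcd] using (Nat.Prime.coprime_iff_not_dvd hp).mpr hnd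
  obtain ⟨a, b, hab⟩ := hcop
  have h1 : (1 : K) = (a : K) * (p : K) + (b : K) * (n : K) := by
    have h' : (((a * (p : ℤ) + b * n : ℤ)) : K) = ((1 : ℤ) : K) := by rw [hab]
    push_cast at h'
    exact h'.symm
  have h2 : ‖(1 : K)‖ ≤ max (‖(a : K)‖ * ‖(p : K)‖) (‖(b : K)‖ * ‖(n : K)‖) := by
    rw [h1]
    exact le_trans (hna _ _) (by rw [norm_mul, norm_mul])
  rw [norm_one] at h2
  have ha1 : ‖(a : K)‖ * ‖(p : K)‖ < 1 :=
    lt_of_le_of_lt (mul_le_of_le_one_left (norm_nonneg _) (aux_int_le_one hna a) |>.trans_eq rfl) hpv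
  have hb1 : ‖(b : K)‖ * ‖(n : K)‖ < 1 := by
    calc ‖(b : K)‖ * ‖(n : K)‖ ≤ 1 * ‖(n : K)‖ :=
          mul_le_mul_of_nonneg_right (aux_int_le_one hna b) (norm_nonneg _)
      _ = ‖(n : K)‖ := one_mul _
      _ < 1 := h
  rcases le_max_iff.mp h2 with h' | h' <;> linarith

private lemma aux_nat_norm (hna : ∀ x y : K, ‖x + y‖ ≤ max ‖x‖ ‖y‖)
    (p : ℕ) (hp : p.Prime) (hpv : ‖(p : K)‖ < 1)
    (n : ℕ) (hn : n ≠ 0) : ‖(n : K)‖ = ‖(p : K)‖ ^ (padicValNat p n) := by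
  haveI : Fact p.Prime := ⟨hp⟩
  obtain ⟨k, hk⟩ : p ^ padicValNat p n ∣ n := pow_padicValNat_dvd
  have hknd : ¬ p ∣ k := by
    intro hd
    obtain ⟨t, rfl⟩ := hd
    refine pow_succ_padicValNat_not_dvd (p := p) hn ⟨t, ?_⟩
    conv_lhs => rw [hk]
    rw [pow_succ]
    ring
  have hk1 : ‖(k : K)‖ = 1 := by
    have : ¬ (p : ℤ) ∣ (k : ℤ) := by exact_mod_cast hknd
    have := aux_unit_norm hna p hp hpv (k : ℤ) this
    simpa using this
  have hkc : (n : K) = ((p : K)) ^ (padicValNat p n) * (k : K) := by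
    conv_lhs => rw [hk]
    push_cast
    ring
  rw [hkc, norm_mul, norm_pow, hk1, mul_one]

private lemma aux_int_norm (hna : ∀ x y : K, ‖x + y‖ ≤ max ‖x‖ ‖y‖)
    (p : ℕ) (hp : p.Prime) (hpv : ‖(p : K)‖ < 1)
    (n : ℤ) (hn : n ≠ 0) : ‖(n : K)‖ = ‖(p : K)‖ ^ (padicValInt p n) := by
  have h1 : ‖(n : K)‖ = ‖((n.natAbs : ℕ) : K)‖ := by
    rcases n.natAbs_eq with h | h
    · conv_lhs => rw [h]
      rw [Int.cast_natCast]
    · conv_lhs => rw [h]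
      rw [Int.cast_neg, norm_neg, Int.cast_natCast]
  rw [h1, aux_nat_norm hna p hp hpv n.natAbs (by simpa using hn)]
  rfl

private lemma aux_rat_norm (hna : ∀ x y : K, ‖x + y‖ ≤ max ‖x‖ ‖y‖)
    (p : ℕ) (hp : p.Prime) (hpv : ‖(p : K)‖ < 1)
    (q : ℚ) (hq : q ≠ 0) : ‖(q : K)‖ = ‖(p : K)‖ ^ (padicValRat p q) := by
  have hρ0 : (0 : ℝ) < ‖(p : K)‖ := by
    rw [norm_pos_iff]
    exact_mod_cast hp.ne_zero
  have hnum : q.num ≠ 0 := Rat.num_ne_zero.mpr hq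
  have hden : (q.den : ℤ) ≠ 0 := by exact_mod_cast q.den_nz
  have hcast : (q : K) = (q.num : K) / ((q.den : ℤ) : K) := by
    rw [Rat.cast_def]; norm_cast
  rw [hcast, norm_div, aux_int_norm hna p hp hpv q.num hnum,
    aux_int_norm hna p hp hpv _ hden]
  have hv : padicValRat p q = (padicValInt p q.num : ℤ) - (padicValNat p q.den : ℤ) := rfl
  rw [hv, zpow_sub₀ (ne_of_gt hρ0), zpow_natCast, zpow_natCast]
  congr 2 <;> simp [padicValInt]

end Aux

/-- Rational points in a mixed characteristic valued field that are pairwise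
`p^N`-separated relative to their (equal) distances to a centre `c ∈ O_K`
number at most `p^(N+1)`. -/
theorem stmt_0 {K : Type*} [NormedField K] [CharZero K]
    (hna : ∀ x y : K, ‖x + y‖ ≤ max ‖x‖ ‖y‖)
    (p : ℕ) (hp : p.Prime) (hpv : ‖(p : K)‖ < 1)
    (m : ℕ) (x : Fin m → K) (hinj : Function.Injective x)
    (hrat : ∀ i, ∃ q : ℚ, x i = (q : K))
    (c : K) (hc : ‖c‖ ≤ 1) (N : ℕ) (hN : 0 < N)
    (hsep : ∀ i j, i ≠ j → ‖(p : K)‖ ^ N * ‖x i - c‖ ≤ ‖x i - x j‖)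
    (heq : ∀ i j, i ≠ j → ‖x i - c‖ = ‖x j - c‖) :
    m ≤ p ^ (N + 1) := by
  haveI : Fact p.Prime := ⟨hp⟩
  haveI : NeZero p := ⟨hp.ne_zero⟩
  rcases Nat.lt_or_ge m 2 with hm | hm
  · have : 1 ≤ p ^ (N + 1) := Nat.one_le_pow _ _ hp.pos
    omega
  choose q hq using hrat
  have hρ0 : (0 : ℝ) < ‖(p : K)‖ := by
    rw [norm_pos_iff]; exact_mod_cast hp.ne_zero
  set i0 : Fin m := ⟨0, by omega⟩ with hi0
  set i1 : Fin m := ⟨1, by omega⟩ with hi1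
  have h01 : i0 ≠ i1 := by simp [hi0, hi1, Fin.ext_iff]
  -- differences of rationals are nonzero
  have hqne : ∀ i j : Fin m, i ≠ j → q i - q j ≠ 0 := by
    intro i j hij h
    apply hij
    apply hinj
    rw [hq i, hq j]
    have : q i = q j := by linarith [sub_eq_zero.mp h]
    rw [this]
  -- norms in K
  have hKnorm : ∀ i j : Fin m, i ≠ j →
      ‖x i - x j‖ = ‖(p : K)‖ ^ (padicValRat p (q i - q j)) := by
    intro i j hij
    have : x i - x j = ((q i - q j : ℚ) : K) := by rw [hq i, hq j]; push_cast; ring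
    rw [this, aux_rat_norm hna p hp hpv _ (hqne i j hij)]
  -- all distances to c are equal
  have hrc : ∀ i : Fin m, ‖x i - c‖ = ‖x i0 - c‖ := by
    intro i
    by_cases h : i = i0
    · rw [h]
    · exact heq i i0 h
  -- upper bound via ultrametric
  have hub : ∀ i j : Fin m, ‖x i - x j‖ ≤ ‖x i0 - c‖ := by
    intro i j
    have : x i - x j = (x i - c) + (-(x j - c)) := by ring
    rw [this]
    refine le_trans (hna _ _) ?_
    rw [norm_neg, hrc i, hrc j]
    simp
  -- pairwise valuation comparison
  have hpair : ∀ i j k l : Fin m, i ≠ j → k ≠ l →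
      padicValRat p (q k - q l) ≤ padicValRat p (q i - q j) + N := by
    intro i j k l hij hkl
    have h1 : ‖(p : K)‖ ^ (padicValRat p (q i - q j) + (N : ℤ)) ≤
        ‖(p : K)‖ ^ (padicValRat p (q k - q l)) := by
      calc ‖(p : K)‖ ^ (padicValRat p (q i - q j) + (N : ℤ))
          = ‖(p : K)‖ ^ (padicValRat p (q i - q j)) * ‖(p : K)‖ ^ (N : ℕ) := by
            rw [zpow_add₀ (ne_of_gt hρ0), zpow_natCast]
        _ = ‖(p : K)‖ ^ (N : ℕ) * ‖x i - x j‖ := by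
            rw [← hKnorm i j hij]; ring
        _ ≤ ‖(p : K)‖ ^ (N : ℕ) * ‖x i0 - c‖ :=
            mul_le_mul_of_nonneg_left (hub i j) (by positivity)
        _ = ‖(p : K)‖ ^ (N : ℕ) * ‖x k - c‖ := by rw [hrc k]
        _ ≤ ‖x k - x l‖ := hsep k l hkl
        _ = ‖(p : K)‖ ^ (padicValRat p (q k - q l)) := hKnorm k l hkl
    have := (zpow_le_zpow_iff_right_of_lt_one₀ hρ0 hpv).mp h1
    omega
  -- min of valuations
  set S : Finset ℤ :=
    (Finset.univ.offDiag).image (fun ij : Fin m × Fin m => padicValRat p (q ij.1 - q ij.2))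
    with hS
  have hS01 : padicValRat p (q i0 - q i1) ∈ S := by
    apply Finset.mem_image.mpr
    exact ⟨(i0, i1), Finset.mem_offDiag.mpr ⟨Finset.mem_univ _, Finset.mem_univ _, h01⟩, rfl⟩
  have hSne : S.Nonempty := ⟨_, hS01⟩
  set a : ℤ := S.min' hSne with ha
  have ha_min : ∀ i j : Fin m, i ≠ j → a ≤ padicValRat p (q i - q j) := by
    intro i j hij
    apply S.min'_le
    exact Finset.mem_image.mpr
      ⟨(i, j), Finset.mem_offDiag.mpr ⟨Finset.mem_univ _, Finset.mem_univ _, hij⟩, rfl⟩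
  have ha_max : ∀ i j : Fin m, i ≠ j → padicValRat p (q i - q j) ≤ a + N := by
    intro i j hij
    obtain ⟨⟨k, l⟩, hkl, hv⟩ := Finset.mem_image.mp (S.min'_mem hSne)
    dsimp only at hv
    have hkl' : k ≠ l := (Finset.mem_offDiag.mp hkl).2.2
    have := hpair k l i j hkl' hij
    omega
  -- move to ℚ_p
  set z : Fin m → ℚ_[p] := fun i => ((q i - q i0 : ℚ) : ℚ_[p]) * (p : ℚ_[p]) ^ (-a) with hz
  have hp1R : (1 : ℝ) < (p : ℝ) := by exact_mod_cast hp.one_lt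
  have hp0R : (0 : ℝ) < (p : ℝ) := by positivity
  have hznorm : ∀ i j : Fin m, i ≠ j →
      ‖z i - z j‖ = (p : ℝ) ^ (a - padicValRat p (q i - q j)) := by
    intro i j hij
    have hzz : z i - z j = ((q i - q j : ℚ) : ℚ_[p]) * (p : ℚ_[p]) ^ (-a) := by
      rw [hz]
      push_cast
      ring
    rw [hzz, norm_mul, norm_zpow, Padic.norm_p,
      Padic.eq_padicNorm, padicNorm.eq_zpow_of_nonzero (hqne i j hij)]
    push_cast
    push_cast
    rw [inv_zpow, ← zpow_neg, neg_neg, ← zpow_add₀ (ne_of_gt hp0R)]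
    congr 1
    ring
  have hz0 : z i0 = 0 := by simp [hz]
  have hz1 : ∀ i, ‖z i‖ ≤ 1 := by
    intro i
    by_cases h : i = i0
    · rw [h, hz0]; simp
    · have hni := hznorm i i0 h
      rw [hz0, sub_zero] at hni
      rw [hni]
      have hle0 : a - padicValRat p (q i - q i0) ≤ 0 := by
        have := ha_min i i0 h; omega
      calc (p : ℝ) ^ (a - padicValRat p (q i - q i0)) ≤ (p : ℝ) ^ (0 : ℤ) :=
            (zpow_le_zpow_iff_right₀ hp1R).mpr hle0
        _ = 1 := zpow_zero _
  set zb : Fin m → ℤ_[p] := fun i => ⟨z i, hz1 i⟩ with hzb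
  set f : Fin m → ZMod (p ^ (N + 1)) := fun i => PadicInt.toZModPow (N + 1) (zb i) with hf
  have hfinj : Function.Injective f := by
    intro i j hij
    by_contra hne
    have hker : zb i - zb j ∈ RingHom.ker (PadicInt.toZModPow (p := p) (N + 1)) := by
      rw [RingHom.mem_ker, map_sub]
      rw [hf] at hij
      simp only at hij
      rw [hij, sub_self]
    rw [PadicInt.ker_toZModPow] at hker
    have hle : ‖zb i - zb j‖ ≤ (p : ℝ) ^ (-((N : ℤ) + 1)) := by
      have h' := (PadicInt.norm_le_pow_iff_mem_span_pow (zb i - zb j) (N + 1)).mpr hker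
      have he : (-((N + 1 : ℕ) : ℤ)) = -((N : ℤ) + 1) := by push_cast; ring
      rwa [he] at h' 
    have hval : ‖zb i - zb j‖ = (p : ℝ) ^ (a - padicValRat p (q i - q j)) := by
      rw [PadicInt.norm_def, PadicInt.coe_sub]
      exact hznorm i j hne
    rw [hval] at hle
    have h1 := (zpow_le_zpow_iff_right₀ hp1R).mp hle
    have h2 := ha_max i j hne
    omega
  calc m = Fintype.card (Fin m) := (Fintype.card_fin m).symm
    _ ≤ Fintype.card (ZMod (p ^ (N + 1))) := Fintype.card_le_of_injective f hfinj
    _ = p ^ (N + 1) := ZMod.card _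
end

section
/- Let K be a complete nonarchimedean valued field, r ≥ 1 an integer, and e = r(r-1)/2. Let B ⊆ O_K be a subset contained in a ball of radius λ ≤ 1, and let f_1,…,f_r : B → O_K be functions such that each f_i is T_r on B, i.e., for all x, y ∈ B there exist coefficients β_{i,k} ∈ O_K (k = 0,…,r-1, the Taylor coefficients of f_i at y) with |β_{i,k}| ≤ 1 and |f_i(x) - Σ_{k<r} β_{i,k}(x-y)^k| ≤ |x - y|^r. Then for any points x_1,…,x_r ∈ B, the determinant of the r×r matrix (f_i(x_j))_{i,j} satisfies |det(f_i(x_j))| ≤ λ^e. -/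
open Finset Matrix

/-- Sum of `m` distinct naturals is at least `0 + 1 + ... + (m-1)`. -/
lemma aux_sum_distinct (t : Finset ℕ) :
    ∑ i ∈ Finset.range t.card, i ≤ ∑ i ∈ t, i := by
  induction' hn : t.card with n ih generalizing t
  · simp
  · have ht : t.Nonempty := Finset.card_pos.mp (by omega)
    set M := t.max' ht with hM
    have hMt : M ∈ t := t.max'_mem ht
    have hsub : t ⊆ Finset.range (M + 1) := by
      intro a ha
      simp only [Finset.mem_range]
      have := Finset.le_max' t a ha
      omega
    have hcard : t.card ≤ M + 1 := by
      simpa using Finset.card_le_card hsub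
    have hMn : n ≤ M := by omega
    have herase : (t.erase M).card = n := by
      rw [Finset.card_erase_of_mem hMt, hn]
      omega
    have := ih (t.erase M) herase
    rw [Finset.sum_range_succ]
    rw [← Finset.sum_erase_add t _ hMt]
    omega

/-- Nonarchimedean bound for determinants by rowwise entry bounds. -/
lemma aux_det_bound {K : Type*} [NormedField K] [IsUltrametricDist K] {n : ℕ}
    (A : Matrix (Fin n) (Fin n) K) (c : Fin n → ℝ) (hc : ∀ j, 0 ≤ c j)
    (h : ∀ j i, ‖A j i‖ ≤ c j) : ‖A.det‖ ≤ ∏ j, c j := by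
  rw [Matrix.det_apply]
  apply IsUltrametricDist.norm_sum_le_of_forall_le_of_nonneg
    (Finset.prod_nonneg fun j _ => hc j)
  intro σ _
  have h1 : ‖Equiv.Perm.sign σ • ∏ i, A (σ i) i‖ = ‖∏ i, A (σ i) i‖ := by
    rcases Int.units_eq_one_or (Equiv.Perm.sign σ) with hs | hs <;> rw [hs] <;> simp
  rw [h1]
  calc ‖∏ i, A (σ i) i‖ = ∏ i, ‖A (σ i) i‖ := by rw [norm_prod]
    _ ≤ ∏ i, c (σ i) := Finset.prod_le_prod (fun i _ => norm_nonneg _)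
        (fun i _ => h (σ i) i)
    _ = ∏ j, c j := Equiv.prod_comp σ c

/-- Determinant vanishes if two rows are proportional to a common vector. -/
lemma aux_det_prop_rows {K : Type*} [Field K] {n : ℕ} (M : Matrix (Fin n) (Fin n) K)
    {j₁ j₂ : Fin n} (hne : j₁ ≠ j₂) (u : Fin n → K) (a b : K)
    (h1 : M j₁ = a • u) (h2 : M j₂ = b • u) : M.det = 0 := by
  by_cases ha : a = 0
  · apply Matrix.det_eq_zero_of_row_eq_zero j₁
    intro i; rw [h1, ha]; simp
  · have h2' : M j₂ = (b * a⁻¹) • M j₁ := by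
      rw [h1, h2, smul_smul]
      congr 1
      field_simp
    have hup : M = M.updateRow j₂ ((b * a⁻¹) • M j₁) := by
      rw [← h2', Matrix.updateRow_eq_self]
    rw [hup, Matrix.det_updateRow_smul, Matrix.det_updateRow_eq_zero hne, mul_zero]


lemma aux_arith (r m : ℕ) (hm : m ≤ r) :
    r * (r - 1) ≤ 2 * ((∑ i ∈ Finset.range m, i) + (r - m) * r) := by
  have h2 : (∑ i ∈ Finset.range m, i) * 2 = m * (m - 1) := Finset.sum_range_id_mul_two m
  obtain ⟨d, rfl⟩ : ∃ d, r = m + d := ⟨r - m, by omega⟩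
  have hd : m + d - m = d := by omega
  rw [hd]
  rcases Nat.eq_zero_or_pos m with hm0 | hm0
  · subst hm0
    simp only [Nat.zero_add, Nat.sub_zero] at *
    have : d - 1 ≤ d := Nat.sub_le _ _
    nlinarith
  · obtain ⟨m', rfl⟩ : ∃ m', m = m' + 1 := ⟨m - 1, by omega⟩
    have e1 : m' + 1 + d - 1 = m' + d := by omega
    rw [e1]
    have e2 : m' + 1 - 1 = m' := by omega
    rw [e2] at h2
    nlinarith

/-- Determinant estimate: if `f₁, …, f_r` are `T_r` functions on a set `B ⊆ O_K`
of diameter at most `λ ≤ 1`, taking values in `O_K`, then for any points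
`x₁, …, x_r ∈ B` the determinant `det (f_i (x_j))` has norm at most `λ^(r(r-1)/2)`. -/
theorem stmt_4 {K : Type*} [NormedField K]
    (hna : ∀ x y : K, ‖x + y‖ ≤ max ‖x‖ ‖y‖)
    (r : ℕ) (hr : 1 ≤ r) (B : Set K) (hB : ∀ x ∈ B, ‖x‖ ≤ 1)
    (lam : ℝ) (hlam0 : 0 ≤ lam) (hlam1 : lam ≤ 1)
    (hdiam : ∀ x ∈ B, ∀ y ∈ B, ‖x - y‖ ≤ lam)
    (f : Fin r → K → K)
    (hfO : ∀ i, ∀ x ∈ B, ‖f i x‖ ≤ 1)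
    (hTr : ∀ i, ∀ y ∈ B, ∃ β : Fin r → K, (∀ k, ‖β k‖ ≤ 1) ∧
      ∀ x ∈ B, ‖f i x - ∑ k : Fin r, β k * (x - y) ^ (k : ℕ)‖ ≤ ‖x - y‖ ^ r)
    (x : Fin r → K) (hx : ∀ j, x j ∈ B) :
    ‖Matrix.det (Matrix.of fun i j => f i (x j))‖ ≤ lam ^ (r * (r - 1) / 2) := by
  haveI : IsUltrametricDist K :=
    IsUltrametricDist.isUltrametricDist_of_isNonarchimedean_norm hna
  classical
  set j0 : Fin r := ⟨0, hr⟩ with hj0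
  set y : K := x j0 with hy
  have hyB : y ∈ B := hx j0
  choose β hβ hβe using fun i => hTr i y hyB
  -- decomposition of the rows of the transposed matrix
  set g : Fin r → Fin (r + 1) → (Fin r → K) := fun j k =>
    if h : (k : ℕ) < r then fun i => β i ⟨(k : ℕ), h⟩ * (x j - y) ^ (k : ℕ)
    else fun i => f i (x j) - ∑ m : Fin r, β i m * (x j - y) ^ (m : ℕ) with hg
  have hrow : ∀ (j i : Fin r), f i (x j) = ∑ k : Fin (r + 1), g j k i := by
    intro j i
    rw [Fin.sum_univ_castSucc]
    have h1 : ∀ k : Fin r, g j k.castSucc i = β i k * (x j - y) ^ (k : ℕ) := by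
      intro k
      simp only [hg, Fin.coe_castSucc, dif_pos k.isLt, Fin.eta]
    have h2 : g j (Fin.last r) i
        = f i (x j) - ∑ m : Fin r, β i m * (x j - y) ^ (m : ℕ) := by
      have hk : ¬ ((Fin.last r : Fin (r+1)) : ℕ) < r := by simp
      simp only [hg, dif_neg hk]
    rw [h2, Finset.sum_congr rfl (fun k _ => h1 k)]
    ring
  -- norm of x j - y
  have hxy : ∀ j : Fin r, ‖x j - y‖ ≤ lam := fun j => hdiam (x j) (hx j) y hyB
  -- main expansion
  rw [← Matrix.det_transpose]
  have htr : (Matrix.of fun i j => f i (x j))ᵀ = Matrix.of fun j => ∑ k : Fin (r+1), g j k := by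
    ext j i
    simp only [Matrix.transpose_apply, Matrix.of_apply, Finset.sum_apply]
    exact hrow j i
  rw [htr]
  have hdet : Matrix.det (Matrix.of fun j => ∑ k : Fin (r+1), g j k)
      = ∑ p : Fin r → Fin (r + 1), Matrix.det (Matrix.of fun j => g j (p j)) := by
    show (Matrix.detRowAlternating (R := K) (n := Fin r)).toMultilinearMap
        (fun j => ∑ k : Fin (r+1), g j k) = _
    rw [MultilinearMap.map_sum]
    rfl
  rw [hdet]
  apply IsUltrametricDist.norm_sum_le_of_forall_le_of_nonneg (pow_nonneg hlam0 _)
  intro p _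
  by_cases hcol : ∃ j₁ j₂ : Fin r, j₁ ≠ j₂ ∧ p j₁ = p j₂ ∧ ((p j₁ : ℕ) < r)
  · -- two proportional rows: determinant vanishes
    obtain ⟨j₁, j₂, hne, hpe, hlt⟩ := hcol
    have hz : Matrix.det (Matrix.of fun j => g j (p j)) = 0 := by
      apply aux_det_prop_rows _ hne (fun i => β i ⟨(p j₁ : ℕ), hlt⟩)
        ((x j₁ - y) ^ (p j₁ : ℕ)) ((x j₂ - y) ^ (p j₁ : ℕ))
      · funext i
        simp only [Matrix.of_apply, hg, dif_pos hlt, Pi.smul_apply, smul_eq_mul]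
        ring
      · funext i
        have hlt2 : ((p j₂ : ℕ)) < r := hpe ▸ hlt
        simp only [Matrix.of_apply, hg, ← hpe, dif_pos hlt, Pi.smul_apply, smul_eq_mul]
        ring
    rw [hz, norm_zero]
    exact pow_nonneg hlam0 _
  · -- injective on non-error rows: bound by Vandermonde-type estimate
    push_neg at hcol
    have hbound : ‖Matrix.det (Matrix.of fun j => g j (p j))‖
        ≤ ∏ j : Fin r, lam ^ (p j : ℕ) := by
      apply aux_det_bound _ _ (fun j => pow_nonneg hlam0 _)
      intro j i
      simp only [Matrix.of_apply, hg]
      by_cases hk : ((p j : ℕ)) < r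
      · rw [dif_pos hk]
        calc ‖β i ⟨(p j : ℕ), hk⟩ * (x j - y) ^ (p j : ℕ)‖
            = ‖β i ⟨(p j : ℕ), hk⟩‖ * ‖(x j - y)‖ ^ (p j : ℕ) := by
              rw [norm_mul, norm_pow]
          _ ≤ 1 * lam ^ (p j : ℕ) := by
              apply mul_le_mul (hβ i _) (pow_le_pow_left₀ (norm_nonneg _) (hxy j) _)
                (pow_nonneg (norm_nonneg _) _) zero_le_one
          _ = lam ^ (p j : ℕ) := one_mul _
      · rw [dif_neg hk]
        have hkr : (p j : ℕ) = r := by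
          have := (p j).isLt
          omega
        calc ‖f i (x j) - ∑ m : Fin r, β i m * (x j - y) ^ (m : ℕ)‖
            ≤ ‖x j - y‖ ^ r := hβe i (x j) (hx j)
          _ ≤ lam ^ r := pow_le_pow_left₀ (norm_nonneg _) (hxy j) r
          _ = lam ^ (p j : ℕ) := by rw [hkr]
    refine hbound.trans ?_
    rw [Finset.prod_pow_eq_pow_sum]
    apply pow_le_pow_of_le_one hlam0 hlam1
    -- combinatorial estimate on the exponent
    letI : DecidablePred (fun j : Fin r => (p j : ℕ) < r) := fun j => Nat.decLt _ _
    set s : Finset (Fin r) := Finset.univ.filter (fun j => (p j : ℕ) < r) with hs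
    set m : ℕ := s.card with hm
    have hmr : m ≤ r := by
      have := Finset.card_filter_le (Finset.univ : Finset (Fin r))
        (fun j => (p j : ℕ) < r)
      simpa [hm, hs] using this
    have hinj : ∀ a ∈ s, ∀ b ∈ s, (fun j => (p j : ℕ)) a = (fun j => (p j : ℕ)) b → a = b := by
      intro a ha b hb hab
      by_contra hne
      have hpa : (p a : ℕ) < r := by
        simpa [hs, Finset.mem_filter] using ha
      have : r ≤ (p a : ℕ) := by
        have := hcol a b hne (Fin.val_injective hab)
        omega
      omega
    have hsum_s : ∑ i ∈ Finset.range m, i ≤ ∑ j ∈ s, (p j : ℕ) := by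
      have himg : (s.image fun j => (p j : ℕ)).card = m := Finset.card_image_of_injOn hinj
      have := aux_sum_distinct (s.image fun j => (p j : ℕ))
      rw [himg] at this
      rwa [Finset.sum_image hinj] at this
    have hsum_sc : ∑ j ∈ sᶜ, (p j : ℕ) = (r - m) * r := by
      have hval : ∀ j ∈ sᶜ, (p j : ℕ) = r := by
        intro j hj
        simp only [hs, Finset.mem_compl, Finset.mem_filter, Finset.mem_univ, true_and,
          not_lt] at hj
        have := (p j).isLt
        omega
      rw [Finset.sum_congr rfl hval, Finset.sum_const, smul_eq_mul]
      congr 1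
      rw [Finset.card_compl, Fintype.card_fin, hm]
    have hsplit : ∑ j : Fin r, (p j : ℕ) = ∑ j ∈ s, (p j : ℕ) + ∑ j ∈ sᶜ, (p j : ℕ) :=
      (Finset.sum_add_sum_compl s _).symm
    have hkey : r * (r - 1) ≤ 2 * ((∑ i ∈ Finset.range m, i) + (r - m) * r) :=
      aux_arith r m hmr
    calc r * (r - 1) / 2 ≤ (2 * ((∑ i ∈ Finset.range m, i) + (r - m) * r)) / 2 :=
          Nat.div_le_div_right hkey
      _ = (∑ i ∈ Finset.range m, i) + (r - m) * r := by omega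
      _ ≤ ∑ j ∈ s, (p j : ℕ) + ∑ j ∈ sᶜ, (p j : ℕ) := by rw [hsum_sc]; omega
      _ = ∑ j : Fin r, (p j : ℕ) := hsplit.symm
end

section
/- Let d ≥ 1, set r = (d+2)(d+1)/2 and e = r(r-1)/2. Let B' ⊆ ℤ_p be a ball of radius p^{-N} with N > (log_p(r!) + 3rd·log_p H)/e, and let u, g : B' → ℤ_p be T_r functions. Suppose x_1,…,x_r ∈ B' are points such that u(x_i) and g(x_i) are rational numbers of height at most H for each i. Then the r×r determinant Δ = det( u(x_i)^j · g(x_i)^k )_{1≤i≤r, 0≤j+k≤d} vanishes: Δ = 0. -/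
/-- `f : B → ℚ_p` is `T_r` on `B`. -/
def IsTr (p : ℕ) [Fact p.Prime] (r : ℕ) (B : Set ℚ_[p]) (f : ℚ_[p] → ℚ_[p]) : Prop :=
  ContDiffOn ℚ_[p] r f B ∧
  (∀ x ∈ B, ∀ i ≤ r, ‖iteratedDeriv i f x‖ ≤ ‖((Nat.factorial i : ℕ) : ℚ_[p])‖) ∧
  (∀ y ∈ B, ∀ x ∈ B,
    ‖f x - ∑ i ∈ Finset.range r,
        iteratedDeriv i f y / ((Nat.factorial i : ℕ) : ℚ_[p]) * (x - y) ^ i‖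
      ≤ ‖x - y‖ ^ r)

open Finset Polynomial

section Aux

variable {p : ℕ} [Fact p.Prime]


lemma ultra_sum_le {α : Type*} (s : Finset α) (f : α → ℚ_[p]) {B : ℝ}
    (hB : 0 ≤ B) (h : ∀ a ∈ s, ‖f a‖ ≤ B) : ‖∑ a ∈ s, f a‖ ≤ B := by
  induction s using Finset.cons_induction with
  | empty => simpa using hB
  | cons a s ha ih =>
    rw [Finset.sum_cons]
    exact le_trans (Padic.nonarchimedean _ _)
      (max_le (h a (mem_cons_self _ _)) (ih fun b hb => h b (mem_cons_of_mem hb)))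

lemma det_norm_le {n : ℕ} (W : Matrix (Fin n) (Fin n) ℚ_[p]) (b : Fin n → ℝ)
    (hb : ∀ l, 0 ≤ b l) (h : ∀ l i, ‖W l i‖ ≤ b l) : ‖W.det‖ ≤ ∏ l, b l := by
  rw [Matrix.det_apply]
  refine ultra_sum_le _ _ (Finset.prod_nonneg fun l _ => hb l) ?_
  intro σ _
  have h1 : ‖Equiv.Perm.sign σ • ∏ i, W (σ i) i‖ = ‖∏ i, W (σ i) i‖ := by
    rcases Int.units_eq_one_or (Equiv.Perm.sign σ) with hs | hs <;> simp [hs]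
  rw [h1, norm_prod]
  calc ∏ i, ‖W (σ i) i‖ ≤ ∏ i, b (σ i) :=
        Finset.prod_le_prod (fun i _ => norm_nonneg _) (fun i _ => h (σ i) i)
    _ = ∏ l, b l := Equiv.prod_comp σ b

lemma det_zero_of_smul_rows {n : Type*} [DecidableEq n] [Fintype n] {R : Type*} [CommRing R]
    (M : Matrix n n R) {i j : n} (hij : i ≠ j) (v : n → R) (a b : R)
    (hi : M i = a • v) (hj : M j = b • v) : M.det = 0 := by
  have h1 : M = M.updateRow i (a • v) := by
    conv_lhs => rw [← Matrix.updateRow_eq_self M i, hi]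
  rw [h1, Matrix.det_updateRow_smul]
  set M1 := M.updateRow i v with hM1
  have hM1j : M1 j = b • v := by rw [hM1, Matrix.updateRow_ne (Ne.symm hij)]; exact hj
  have h2 : M1 = M1.updateRow j (b • v) := by
    conv_lhs => rw [← Matrix.updateRow_eq_self M1 j, hM1j]
  rw [h2, Matrix.det_updateRow_smul]
  have h3 : ((M1.updateRow j v)) i = (M1.updateRow j v) j := by
    rw [Matrix.updateRow_ne hij, Matrix.updateRow_self, hM1, Matrix.updateRow_self]
  rw [Matrix.det_zero_of_row_eq hij h3, mul_zero, mul_zero]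

lemma sum_distinct_ge (S : Finset ℕ) : S.card.choose 2 ≤ ∑ x ∈ S, x := by
  induction S using Finset.strongInduction with
  | _ S ih =>
    rcases S.eq_empty_or_nonempty with rfl | hS
    · simp
    · set m := S.max' hS with hm
      have hmem : m ∈ S := S.max'_mem hS
      have hle : S.card ≤ m + 1 := by
        have hsub : S ⊆ range (m + 1) :=
          fun y hy => mem_range.2 (Nat.lt_succ_of_le (S.le_max' y hy))
        simpa using Finset.card_le_card hsub
      have hih := ih (S.erase m) (Finset.erase_ssubset hmem)
      have hcard : (S.erase m).card = S.card - 1 := Finset.card_erase_of_mem hmem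
      rw [← Finset.add_sum_erase S _ hmem]
      rcases Nat.exists_eq_add_of_le (Finset.card_pos.2 hS) with ⟨k, hk⟩
      have hk' : S.card = k + 1 := by omega
      have hch : S.card.choose 2 = k.choose 2 + k := by
        rw [hk', Nat.choose_succ_succ, Nat.choose_one_right, Nat.add_comm]
      rw [hch]
      have hk2 : (S.erase m).card = k := by omega
      rw [hk2] at hih
      omega

lemma choose_two_ineq (r : ℕ) : ∀ b, b ≤ r → r.choose 2 ≤ (r - b).choose 2 + b * r := by
  intro b
  induction b with
  | zero => simp
  | succ n ih =>
    intro h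
    have h1 := ih (Nat.le_of_succ_le h)
    have h2 : (r - n).choose 2 ≤ (r - (n + 1)).choose 2 + (r - (n + 1)) := by
      have hrn : r - n = (r - (n + 1)) + 1 := by omega
      rw [hrn, Nat.choose_succ_succ, Nat.choose_one_right]
      have : (r - (n + 1)).choose (Nat.succ 1) = (r - (n + 1)).choose 2 := rfl
      omega
    have h3 : (r - (n + 1)) + n * r ≤ (n + 1) * r := by
      have : r - (n + 1) ≤ r := Nat.sub_le _ _
      calc (r - (n + 1)) + n * r ≤ r + n * r := by omega
        _ = (n + 1) * r := by ring
    omega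

/-- `f` is bounded by 1 on `B'` and approximable to order `r` around `y` by a
polynomial with coefficients of norm at most 1. -/
def Approx (p : ℕ) [Fact p.Prime] (r : ℕ) (y : ℚ_[p]) (B' : Set ℚ_[p])
    (f : ℚ_[p] → ℚ_[p]) : Prop :=
  (∀ z ∈ B', ‖f z‖ ≤ 1) ∧ ∃ c : ℕ → ℚ_[p], (∀ m, ‖c m‖ ≤ 1) ∧
    ∀ z ∈ B', ‖f z - ∑ m ∈ Finset.range r, c m * (z - y) ^ m‖ ≤ ‖z - y‖ ^ r

variable {r : ℕ} {y : ℚ_[p]} {B' : Set ℚ_[p]}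

lemma approx_one (hr0 : 0 < r) : Approx p r y B' (fun _ => 1) := by
  refine ⟨fun z _ => by simp, fun m => if m = 0 then 1 else 0, fun m => ?_, fun z hz => ?_⟩
  · by_cases h : m = 0 <;> simp [h]
  · have : ∑ m ∈ Finset.range r, (if m = 0 then (1:ℚ_[p]) else 0) * (z - y) ^ m = 1 := by
      rw [Finset.sum_eq_single 0]
      · simp
      · intro b _ hb; simp [hb]
      · intro h; exact absurd (Finset.mem_range.2 hr0) h
    rw [this]
    simpa using pow_nonneg (norm_nonneg _) r

lemma approx_mul (hball : ∀ z ∈ B', ‖z - y‖ ≤ 1) {f g : ℚ_[p] → ℚ_[p]}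
    (hf : Approx p r y B' f) (hg : Approx p r y B' g) :
    Approx p r y B' (fun z => f z * g z) := by
  obtain ⟨hfb, c, hc, hfa⟩ := hf
  obtain ⟨hgb, c', hc', hga⟩ := hg
  set P : ℚ_[p][X] := ∑ i ∈ range r, C (c i) * X ^ i with hP
  set Q : ℚ_[p][X] := ∑ i ∈ range r, C (c' i) * X ^ i with hQ
  have hPco : ∀ m, ‖P.coeff m‖ ≤ 1 := by
    intro m
    rw [hP, Polynomial.finset_sum_coeff]
    simp only [Polynomial.coeff_C_mul, Polynomial.coeff_X_pow, mul_ite, mul_one, mul_zero]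
    rw [Finset.sum_ite_eq (range r) m c]
    by_cases h : m ∈ range r <;> simp [h, hc m]
  have hQco : ∀ m, ‖Q.coeff m‖ ≤ 1 := by
    intro m
    rw [hQ, Polynomial.finset_sum_coeff]
    simp only [Polynomial.coeff_C_mul, Polynomial.coeff_X_pow, mul_ite, mul_one, mul_zero]
    rw [Finset.sum_ite_eq (range r) m c']
    by_cases h : m ∈ range r <;> simp [h, hc' m]
  have hPQco : ∀ m, ‖(P * Q).coeff m‖ ≤ 1 := by
    intro m
    rw [Polynomial.coeff_mul]
    refine ultra_sum_le _ _ zero_le_one fun q _ => ?_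
    calc ‖P.coeff q.1 * Q.coeff q.2‖ = ‖P.coeff q.1‖ * ‖Q.coeff q.2‖ := norm_mul _ _
      _ ≤ 1 * 1 := mul_le_mul (hPco _) (hQco _) (norm_nonneg _) zero_le_one
      _ = 1 := one_mul 1
  have hPev : ∀ z : ℚ_[p], P.eval z = ∑ i ∈ range r, c i * z ^ i := by
    intro z; rw [hP]; simp [Polynomial.eval_finset_sum]
  have hQev : ∀ z : ℚ_[p], Q.eval z = ∑ i ∈ range r, c' i * z ^ i := by
    intro z; rw [hQ]; simp [Polynomial.eval_finset_sum]
  refine ⟨fun z hz => by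
      rw [norm_mul]
      exact mul_le_one₀ (hfb z hz) (norm_nonneg _) (hgb z hz),
    fun m => (P * Q).coeff m, hPQco, fun z hz => ?_⟩
  set w := z - y with hw
  have hw1 : ‖w‖ ≤ 1 := hball z hz
  have hw0 : (0:ℝ) ≤ ‖w‖ := norm_nonneg _
  have hwr : (0:ℝ) ≤ ‖w‖ ^ r := pow_nonneg hw0 r
  have hQev1 : ‖Q.eval w‖ ≤ 1 := by
    rw [hQev]
    refine ultra_sum_le _ _ zero_le_one fun i _ => ?_
    rw [norm_mul, norm_pow]
    exact mul_le_one₀ (hc' i) (pow_nonneg hw0 _) (pow_le_one₀ hw0 hw1)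
  -- first piece : ‖f z * g z - P.eval w * Q.eval w‖ ≤ ‖w‖ ^ r
  have h1 : ‖f z * g z - P.eval w * Q.eval w‖ ≤ ‖w‖ ^ r := by
    have hident : f z * g z - P.eval w * Q.eval w
        = f z * (g z - Q.eval w) + (f z - P.eval w) * Q.eval w := by ring
    rw [hident]
    refine le_trans (Padic.nonarchimedean _ _) (max_le ?_ ?_)
    · rw [norm_mul]
      calc ‖f z‖ * ‖g z - Q.eval w‖ ≤ 1 * (‖w‖ ^ r) := by
            refine mul_le_mul (hfb z hz) ?_ (norm_nonneg _) zero_le_one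
            rw [hQev]; exact hga z hz
        _ = ‖w‖ ^ r := one_mul _
    · rw [norm_mul]
      calc ‖f z - P.eval w‖ * ‖Q.eval w‖ ≤ (‖w‖ ^ r) * 1 := by
            refine mul_le_mul ?_ hQev1 (norm_nonneg _) hwr
            rw [hPev]; exact hfa z hz
        _ = ‖w‖ ^ r := mul_one _
  -- second piece : ‖P.eval w * Q.eval w - ∑ m < r, (P*Q).coeff m * w ^ m‖ ≤ ‖w‖ ^ r
  have h2 : ‖P.eval w * Q.eval w - ∑ m ∈ range r, (P * Q).coeff m * w ^ m‖ ≤ ‖w‖ ^ r := by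
    set D := max ((P * Q).natDegree + 1) r with hD
    have hdlt : (P * Q).natDegree < D := lt_of_lt_of_le (Nat.lt_succ_self _) (le_max_left _ _)
    have hrD : r ≤ D := le_max_right _ _
    have hev : P.eval w * Q.eval w = ∑ m ∈ range D, (P * Q).coeff m * w ^ m := by
      rw [← Polynomial.eval_mul]; exact Polynomial.eval_eq_sum_range' hdlt w
    rw [hev]
    have hsplit : ∑ m ∈ range D, (P * Q).coeff m * w ^ m
        = ∑ m ∈ range r, (P * Q).coeff m * w ^ m + ∑ m ∈ Finset.Ico r D, (P * Q).coeff m * w ^ m := by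
      rw [← Finset.sum_range_add_sum_Ico _ hrD]
    rw [hsplit, add_sub_cancel_left]
    refine ultra_sum_le _ _ hwr fun m hm => ?_
    have hrm : r ≤ m := (Finset.mem_Ico.1 hm).1
    rw [norm_mul]
    calc ‖(P * Q).coeff m‖ * ‖w ^ m‖ ≤ 1 * ‖w‖ ^ m := by
          rw [norm_pow]
          exact mul_le_mul (hPQco m) le_rfl (pow_nonneg hw0 _) zero_le_one
      _ = ‖w‖ ^ m := one_mul _
      _ ≤ ‖w‖ ^ r := pow_le_pow_of_le_one hw0 hw1 hrm
  calc ‖f z * g z - ∑ m ∈ range r, (P * Q).coeff m * w ^ m‖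
      = ‖(f z * g z - P.eval w * Q.eval w)
          + (P.eval w * Q.eval w - ∑ m ∈ range r, (P * Q).coeff m * w ^ m)‖ := by rw [sub_add_sub_cancel]
    _ ≤ _ := le_trans (Padic.nonarchimedean _ _) (max_le h1 h2)

lemma approx_pow (hr0 : 0 < r) (hball : ∀ z ∈ B', ‖z - y‖ ≤ 1) {f : ℚ_[p] → ℚ_[p]}
    (hf : Approx p r y B' f) : ∀ n, Approx p r y B' (fun z => f z ^ n) := by
  intro n
  induction n with
  | zero => simpa using approx_one hr0
  | succ n ih =>
    have := approx_mul hball ih hf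
    simpa [pow_succ] using this

lemma isTr_approx {f : ℚ_[p] → ℚ_[p]} (hf : IsTr p r B' f) (hy : y ∈ B') :
    Approx p r y B' f := by
  obtain ⟨-, hbd, htay⟩ := hf
  refine ⟨fun z hz => ?_, fun m =>
      if m < r then iteratedDeriv m f y / ((m.factorial : ℕ) : ℚ_[p]) else 0,
    fun m => ?_, fun z hz => ?_⟩
  · have := hbd z hz 0 (Nat.zero_le r)
    simpa [iteratedDeriv_zero] using this
  · by_cases h : m < r
    · simp only [h, if_true]
      have hfac : (0:ℝ) < ‖((m.factorial : ℕ) : ℚ_[p])‖ := by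
        rw [norm_pos_iff]
        exact_mod_cast Nat.cast_ne_zero.2 m.factorial_ne_zero
      rw [norm_div, div_le_one hfac]
      exact hbd y hy m (le_of_lt h)
    · simp [h]
  · have heq : ∑ m ∈ Finset.range r,
        (if m < r then iteratedDeriv m f y / ((m.factorial : ℕ) : ℚ_[p]) else 0) * (z - y) ^ m
        = ∑ m ∈ Finset.range r,
          iteratedDeriv m f y / ((m.factorial : ℕ) : ℚ_[p]) * (z - y) ^ m := by
      refine Finset.sum_congr rfl fun m hm => ?_
      rw [if_pos (Finset.mem_range.1 hm)]
    rw [heq]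
    exact htay y hy z hz

lemma det_approx_bound (δ : ℝ) (hδ0 : 0 ≤ δ) (hδ1 : δ ≤ 1)
    (f : Fin r → ℚ_[p] → ℚ_[p]) (hf : ∀ l, Approx p r y B' (f l))
    (x : Fin r → ℚ_[p]) (hx : ∀ i, x i ∈ B') (hxy : ∀ i, ‖x i - y‖ ≤ δ) :
    ‖(Matrix.of fun l i => f l (x i)).det‖ ≤ δ ^ (r.choose 2) := by
  choose c hc1 hc2 using fun l => (hf l).2
  set W : Fin r → ℕ → (Fin r → ℚ_[p]) := fun l m =>
    if m < r then (fun i => c l m * (x i - y) ^ m)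
    else fun i => f l (x i) - ∑ m' ∈ range r, c l m' * (x i - y) ^ m' with hW
  set M : Matrix (Fin r) (Fin r) ℚ_[p] := Matrix.of fun l i => f l (x i) with hM
  have hrows : M = (fun l => ∑ m ∈ range (r + 1), W l m) := by
    funext l i
    show f l (x i) = (∑ m ∈ range (r + 1), W l m) i
    rw [Finset.sum_apply, Finset.sum_range_succ]
    have h1 : ∀ m ∈ range r, W l m i = c l m * (x i - y) ^ m := by
      intro m hm; rw [hW]; simp only [Finset.mem_range.1 hm, if_true]
    rw [Finset.sum_congr rfl h1]
    have h2 : W l r i = f l (x i) - ∑ m' ∈ range r, c l m' * (x i - y) ^ m' := by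
      rw [hW]; simp
    rw [h2]
    ring
  have hdet : M.det = ∑ t ∈ Fintype.piFinset (fun _ : Fin r => range (r + 1)),
      (Matrix.of fun l i => W l (t l) i).det := by
    have h0 : M.det = Matrix.detRowAlternating M := rfl
    rw [h0, hrows]
    exact (Matrix.detRowAlternating (R := ℚ_[p]) (n := Fin r)).toMultilinearMap.map_sum_finset
      W (fun _ => range (r + 1))
  rw [hdet]
  refine ultra_sum_le _ _ (pow_nonneg hδ0 _) fun t ht => ?_
  have htl : ∀ l, t l ≤ r := fun l =>
    Nat.lt_succ_iff.1 (Finset.mem_range.1 ((Fintype.mem_piFinset).1 ht l))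
  by_cases hdup : ∃ l₀ l₁, l₀ ≠ l₁ ∧ t l₀ = t l₁ ∧ t l₀ < r
  · obtain ⟨l₀, l₁, hne, heq, hlt⟩ := hdup
    have hzero : (Matrix.of fun l i => W l (t l) i).det = 0 := by
      refine det_zero_of_smul_rows _ hne (fun i => (x i - y) ^ (t l₀))
        (c l₀ (t l₀)) (c l₁ (t l₁)) ?_ ?_
      · funext i
        show W l₀ (t l₀) i = _
        rw [hW]; simp only [hlt, if_true]; simp [smul_eq_mul]
      · funext i
        show W l₁ (t l₁) i = _
        rw [hW]; simp only [← heq, hlt, if_true]; simp [smul_eq_mul]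
    rw [hzero, norm_zero]
    exact pow_nonneg hδ0 _
  · push_neg at hdup
    have hrowb : ∀ l i, ‖W l (t l) i‖ ≤ δ ^ (t l) := by
      intro l i
      by_cases h : t l < r
      · have : W l (t l) i = c l (t l) * (x i - y) ^ (t l) := by
          rw [hW]; simp only [h, if_true]
        rw [this, norm_mul, norm_pow]
        calc ‖c l (t l)‖ * ‖x i - y‖ ^ (t l) ≤ 1 * δ ^ (t l) :=
              mul_le_mul (hc1 l _) (pow_le_pow_left₀ (norm_nonneg _) (hxy i) _)
                (pow_nonneg (norm_nonneg _) _) zero_le_one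
          _ = δ ^ (t l) := one_mul _
      · have htr : t l = r := le_antisymm (htl l) (not_lt.1 h)
        have : W l (t l) i = f l (x i) - ∑ m' ∈ range r, c l m' * (x i - y) ^ m' := by
          rw [hW]; simp only [h, if_false]
        rw [this, htr]
        exact le_trans (hc2 l (x i) (hx i)) (pow_le_pow_left₀ (norm_nonneg _) (hxy i) _)
    have hdetb := det_norm_le (Matrix.of fun l i => W l (t l) i) (fun l => δ ^ (t l))
      (fun l => pow_nonneg hδ0 _) (fun l i => hrowb l i)
    rw [Finset.prod_pow_eq_pow_sum] at hdetb
    refine le_trans hdetb (pow_le_pow_of_le_one hδ0 hδ1 ?_)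
    -- combinatorial: r.choose 2 ≤ ∑ l, t l
    set s := Finset.univ.filter (fun l => t l < r) with hs
    have hinj : ∀ a ∈ s, ∀ b ∈ s, t a = t b → a = b := by
      intro a ha b hb hab
      by_contra hne
      exact absurd (hdup a b hne hab) (not_le.2 (Finset.mem_filter.1 ha).2)
    have h1 : s.card.choose 2 ≤ ∑ l ∈ s, t l := by
      have himg := sum_distinct_ge (s.image t)
      rw [Finset.card_image_of_injOn fun a ha b hb hab => hinj a ha b hb hab] at himg
      rwa [Finset.sum_image hinj] at himg
    have hscard : s.card ≤ r := by
      calc s.card ≤ Finset.univ.card := Finset.card_filter_le _ _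
        _ = r := by simp
    have h2 : ∑ l ∈ Finset.univ.filter (fun l => ¬ t l < r), t l
        = (r - s.card) * r := by
      rw [Finset.sum_congr rfl (fun l hl =>
        le_antisymm (htl l) (not_lt.1 (Finset.mem_filter.1 hl).2))]
      rw [Finset.sum_const, smul_eq_mul]
      congr 1
      have := Finset.card_filter_add_card_filter_not
        (s := (Finset.univ : Finset (Fin r))) (p := fun l => t l < r)
      simp only [Finset.card_univ, Fintype.card_fin] at this
      rw [← hs] at this
      omega
    have hmain := choose_two_ineq r (r - s.card) (Nat.sub_le _ _)
    have hrs : r - (r - s.card) = s.card := by omega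
    rw [hrs] at hmain
    calc r.choose 2 ≤ s.card.choose 2 + (r - s.card) * r := hmain
      _ ≤ ∑ l ∈ s, t l + ∑ l ∈ Finset.univ.filter (fun l => ¬ t l < r), t l :=
          add_le_add h1 (le_of_eq h2.symm)
      _ = ∑ l, t l := Finset.sum_filter_add_sum_filter_not _ _ _

end Aux

/-- Determinant vanishing in the determinant method: given `T_r` functions `u, g`
on a ball `B' ⊆ ℤ_p` of radius `p^{-N}` with `N > (log_p r! + 3rd log_p H)/e`,
and points `x₁,…,x_r` of `B'` at which `u` and `g` take rational values of
height at most `H`, the determinant `det(u(x_i)^j g(x_i)^k)_{i,(j,k)}` vanishes. -/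
theorem stmt_9 (p : ℕ) [Fact p.Prime] (d : ℕ) (hd : 1 ≤ d)
    (H : ℕ) (hH : 1 ≤ H) (N : ℕ) (hN0 : 0 < N)
    (r e : ℕ) (hr : r = (d + 2).choose 2) (he : e = r.choose 2)
    (hN : (Real.logb p (Nat.factorial r : ℝ) + 3 * r * d * Real.logb p H) / e < N)
    (b0 : ℚ_[p]) (B' : Set ℚ_[p]) (hB' : B' = {x : ℚ_[p] | ‖x - b0‖ < (p : ℝ) ^ (-(N : ℤ))})
    (hB'O : ∀ x ∈ B', ‖x‖ ≤ 1)
    (u g : ℚ_[p] → ℚ_[p]) (hu : IsTr p r B' u) (hg : IsTr p r B' g)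
    (x : Fin r → ℚ_[p]) (hx : ∀ i, x i ∈ B')
    (hqu : ∀ i, ∃ a b : ℤ, |a| ≤ (H : ℤ) ∧ |b| ≤ (H : ℤ) ∧ b ≠ 0 ∧ u (x i) = (a : ℚ_[p]) / b)
    (hqg : ∀ i, ∃ a b : ℤ, |a| ≤ (H : ℤ) ∧ |b| ≤ (H : ℤ) ∧ b ≠ 0 ∧ g (x i) = (a : ℚ_[p]) / b)
    (ι : Fin r → ℕ × ℕ) (hι : Function.Injective ι)
    (hιim : ∀ q : ℕ × ℕ, q ∈ Set.range ι ↔ q.1 + q.2 ≤ d) :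
    Matrix.det (Matrix.of fun i l => u (x i) ^ (ι l).1 * g (x i) ^ (ι l).2) = 0 := by
  have hp1 : (1 : ℝ) < p := by exact_mod_cast (Fact.out : p.Prime).one_lt
  set δ : ℝ := (p : ℝ) ^ (-(N : ℤ)) with hδ
  have hδ0 : 0 < δ := zpow_pos (lt_trans zero_lt_one hp1) _
  have hδ1 : δ ≤ 1 := by
    rw [hδ]
    calc (p:ℝ) ^ (-(N:ℤ)) ≤ (p:ℝ) ^ (0:ℤ) := zpow_le_zpow_right₀ hp1.le (by omega)
      _ = 1 := zpow_zero _
  have hyB : b0 ∈ B' := by rw [hB']; simp only [Set.mem_setOf_eq, sub_self, norm_zero]; exact hδ0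
  have hball1 : ∀ z ∈ B', ‖z - b0‖ ≤ 1 := by
    intro z hz
    rw [hB'] at hz
    exact le_trans (le_of_lt hz) hδ1
  have hxy : ∀ i, ‖x i - b0‖ ≤ δ := by
    intro i
    have := hx i
    rw [hB'] at this
    exact le_of_lt this
  have hr3 : 3 ≤ r := by
    rw [hr]
    calc 3 = (3:ℕ).choose 2 := by decide
      _ ≤ (d + 2).choose 2 := Nat.choose_le_choose 2 (by omega)
  have hr0 : 0 < r := by omega
  have he3 : 3 ≤ e := by
    rw [he]
    calc 3 = (3:ℕ).choose 2 := by decide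
      _ ≤ r.choose 2 := Nat.choose_le_choose 2 hr3
  -- Approximability of the column functions
  have huA := isTr_approx hu hyB
  have hgA := isTr_approx hg hyB
  have hcolA : ∀ l : Fin r, Approx p r b0 B' (fun z => u z ^ (ι l).1 * g z ^ (ι l).2) :=
    fun l => approx_mul hball1 (approx_pow hr0 hball1 huA _) (approx_pow hr0 hball1 hgA _)
  set M : Matrix (Fin r) (Fin r) ℚ_[p] :=
    Matrix.of fun i l => u (x i) ^ (ι l).1 * g (x i) ^ (ι l).2 with hM
  -- p-adic bound on the determinant
  have hMn : ‖M.det‖ ≤ δ ^ e := by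
    rw [← Matrix.det_transpose, he]
    exact det_approx_bound δ hδ0.le hδ1
      (fun l z => u z ^ (ι l).1 * g z ^ (ι l).2) hcolA x hx hxy
  -- rational values
  choose au bu hau hbu hbu0 huv using hqu
  choose ag bg hag hbg hbg0 hgv using hqg
  have hjk : ∀ l, (ι l).1 + (ι l).2 ≤ d := fun l => (hιim (ι l)).1 ⟨l, rfl⟩
  set D : Matrix (Fin r) (Fin r) ℤ := Matrix.of fun i l =>
    au i ^ (ι l).1 * bu i ^ (d - (ι l).1) * ag i ^ (ι l).2 * bg i ^ (d - (ι l).2) with hD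
  set β : Fin r → ℤ := fun i => bu i ^ d * bg i ^ d with hβ
  have hentry : ∀ i l, ((β i : ℤ) : ℚ_[p]) * M i l = ((D i l : ℤ) : ℚ_[p]) := by
    intro i l
    have hbu' : ((bu i : ℤ) : ℚ_[p]) ≠ 0 := Int.cast_ne_zero.2 (hbu0 i)
    have hbg' : ((bg i : ℤ) : ℚ_[p]) ≠ 0 := Int.cast_ne_zero.2 (hbg0 i)
    show ((β i : ℤ) : ℚ_[p]) * (u (x i) ^ (ι l).1 * g (x i) ^ (ι l).2) = _
    rw [huv i, hgv i, hβ, hD]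
    push_cast
    rw [div_pow, div_pow]
    rw [show ((bu i : ℚ_[p])) ^ d = (bu i : ℚ_[p]) ^ (ι l).1 * (bu i : ℚ_[p]) ^ (d - (ι l).1) from by
      rw [← pow_add]; congr 1; have := hjk l; omega]
    rw [show ((bg i : ℚ_[p])) ^ d = (bg i : ℚ_[p]) ^ (ι l).2 * (bg i : ℚ_[p]) ^ (d - (ι l).2) from by
      rw [← pow_add]; congr 1; have := hjk l; omega]
    field_simp
    rw [Matrix.of_apply]; push_cast
    ring
  have h1 : (Matrix.of fun i l => ((β i : ℤ) : ℚ_[p]) * M i l)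
      = (Int.castRingHom ℚ_[p]).mapMatrix D := by
    ext i l
    simp only [Matrix.of_apply, RingHom.mapMatrix_apply, Matrix.map_apply, eq_intCast]
    exact hentry i l
  have hdetscale : ((D.det : ℤ) : ℚ_[p]) = (∏ i, ((β i : ℤ) : ℚ_[p])) * M.det := by
    have h2 : ((D.det : ℤ) : ℚ_[p]) = ((Int.castRingHom ℚ_[p]).mapMatrix D).det := by
      rw [← RingHom.map_det]; simp
    rw [h2, ← h1, Matrix.det_mul_column]
  -- p-adic bound on the integer determinant
  have hnormD : ‖((D.det : ℤ) : ℚ_[p])‖ ≤ δ ^ e := by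
    rw [hdetscale, norm_mul]
    calc ‖∏ i, ((β i : ℤ) : ℚ_[p])‖ * ‖M.det‖ ≤ 1 * (δ ^ e) := by
          refine mul_le_mul ?_ hMn (norm_nonneg _) zero_le_one
          rw [norm_prod]
          exact Finset.prod_le_one (fun i _ => norm_nonneg _)
            (fun i _ => Padic.norm_int_le_one (β i))
      _ = δ ^ e := one_mul _
  have hδe : δ ^ e = (p : ℝ) ^ (-(((N * e : ℕ) : ℤ))) := by
    rw [hδ, ← zpow_natCast ((p:ℝ) ^ (-(N:ℤ))) e, ← zpow_mul]
    congr 1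
    push_cast
    ring
  have hdvd : ((p : ℤ)) ^ (N * e) ∣ D.det := by
    refine (Padic.norm_int_le_pow_iff_dvd _ _).1 ?_
    rw [← hδe]
    exact hnormD
  -- archimedean bound on the integer determinant
  have hDent : ∀ i l, |D i l| ≤ (H : ℤ) ^ (2 * d) := by
    intro i l
    have habs : |D i l| = |au i| ^ (ι l).1 * |bu i| ^ (d - (ι l).1)
        * |ag i| ^ (ι l).2 * |bg i| ^ (d - (ι l).2) := by
      rw [hD]
      simp only [Matrix.of_apply]
      rw [abs_mul, abs_mul, abs_mul, abs_pow, abs_pow, abs_pow, abs_pow]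
    rw [habs]
    calc |au i| ^ (ι l).1 * |bu i| ^ (d - (ι l).1) * |ag i| ^ (ι l).2 * |bg i| ^ (d - (ι l).2)
        ≤ (H:ℤ) ^ (ι l).1 * (H:ℤ) ^ (d - (ι l).1) * (H:ℤ) ^ (ι l).2 * (H:ℤ) ^ (d - (ι l).2) := by
          gcongr <;> first
            | exact abs_nonneg _
            | exact hau i | exact hbu i | exact hag i | exact hbg i
      _ = (H:ℤ) ^ (2 * d) := by
          rw [← pow_add, ← pow_add, ← pow_add]
          congr 1
          have := hjk l
          omega
  have harch : |D.det| ≤ (r.factorial : ℤ) * ((H : ℤ) ^ (2 * d)) ^ r := by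
    rw [Matrix.det_apply]
    refine le_trans (Finset.abs_sum_le_sum_abs _ _) ?_
    have hterm : ∀ σ : Equiv.Perm (Fin r),
        |Equiv.Perm.sign σ • ∏ i, D (σ i) i| ≤ ((H:ℤ) ^ (2 * d)) ^ r := by
      intro σ
      have habs : |Equiv.Perm.sign σ • ∏ i, D (σ i) i| = |∏ i, D (σ i) i| := by
        rcases Int.units_eq_one_or (Equiv.Perm.sign σ) with hs | hs <;> simp [hs]
      rw [habs, Finset.abs_prod]
      calc ∏ i, |D (σ i) i| ≤ ∏ _i : Fin r, (H:ℤ) ^ (2 * d) :=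
            Finset.prod_le_prod (fun _ _ => abs_nonneg _) (fun i _ => hDent (σ i) i)
        _ = ((H:ℤ) ^ (2 * d)) ^ r := by
            rw [Finset.prod_const, Finset.card_univ, Fintype.card_fin]
    calc ∑ σ : Equiv.Perm (Fin r), |Equiv.Perm.sign σ • ∏ i, D (σ i) i|
        ≤ ∑ _σ : Equiv.Perm (Fin r), ((H:ℤ) ^ (2 * d)) ^ r :=
          Finset.sum_le_sum (fun σ _ => hterm σ)
      _ = (r.factorial : ℤ) * ((H:ℤ) ^ (2 * d)) ^ r := by
          rw [Finset.sum_const, Finset.card_univ, Fintype.card_perm, Fintype.card_fin,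
            nsmul_eq_mul]
  -- the integer determinant vanishes
  have hD0 : D.det = 0 := by
    by_contra hDne
    have hge : ((p : ℤ)) ^ (N * e) ≤ |D.det| :=
      Int.le_of_dvd (abs_pos.2 hDne) ((dvd_abs _ _).2 hdvd)
    have hR1 : ((p : ℝ)) ^ (N * e) ≤ (r.factorial : ℝ) * (H : ℝ) ^ (2 * d * r) := by
      have h := le_trans hge harch
      have : ((p:ℤ))^(N*e) ≤ (r.factorial : ℤ) * (H:ℤ) ^ (2*d*r) := by
        rwa [← pow_mul] at h
      exact_mod_cast this
    have hHR : (1:ℝ) ≤ (H:ℝ) := by exact_mod_cast hH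
    have hR2 : (r.factorial : ℝ) * (H : ℝ) ^ (2 * d * r)
        ≤ (r.factorial : ℝ) * (H : ℝ) ^ (3 * r * d) := by
      have hexp : 2 * d * r ≤ 3 * r * d := by
        calc 2 * d * r = d * r * 2 := by ring
          _ ≤ d * r * 3 := Nat.mul_le_mul_left _ (by norm_num)
          _ = 3 * r * d := by ring
      have := pow_le_pow_right₀ hHR hexp
      have hfac : (0:ℝ) ≤ (r.factorial : ℝ) := by positivity
      nlinarith
    have he0 : (0:ℝ) < (e : ℝ) := by exact_mod_cast (by omega : 0 < e)
    have hlt : Real.logb p (r.factorial) + 3 * r * d * Real.logb p H < (N : ℝ) * e :=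
      (div_lt_iff₀ he0).1 hN
    have hX : Real.logb p ((r.factorial : ℝ) * (H : ℝ) ^ (3 * r * d)) < (N : ℝ) * e := by
      rw [Real.logb_mul (by positivity) (by positivity), Real.logb_pow]
      push_cast
      linarith
    have hR3 := (Real.logb_lt_iff_lt_rpow hp1 (by positivity)).1 hX
    rw [show ((N : ℝ) * e) = ((N * e : ℕ) : ℝ) by push_cast; ring, Real.rpow_natCast] at hR3
    linarith
  -- conclude
  have hprod : (∏ i, ((β i : ℤ) : ℚ_[p])) ≠ 0 := by
    refine Finset.prod_ne_zero_iff.2 fun i _ => ?_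
    refine Int.cast_ne_zero.2 ?_
    exact mul_ne_zero (pow_ne_zero _ (hbu0 i)) (pow_ne_zero _ (hbg0 i))
  have : (∏ i, ((β i : ℤ) : ℚ_[p])) * M.det = 0 := by
    rw [← hdetscale, hD0, Int.cast_zero]
  exact (mul_eq_zero.1 this).resolve_left hprod
end

section
/- Let K be a nonarchimedean valued field of mixed characteristic (0,p), and f : U ⊆ O_K → O_K a function, B ⊆ U an open ball of radius ρ with the following properties for some r ≥ 0: f is C^{r+1} on B; rv(f^{(j)}) is constant on B for 0 ≤ j ≤ r+1; each f^{(j)} has the Jacobian property on B (if B' ⊆ B is an open ball then f^{(j)}(B') is a singleton or an open ball of radius |f^{(j+1)}(x)|·rad(B') for any x ∈ B); and |f(x)| ≤ 1 on B. Then for all x ∈ B and all 0 ≤ j ≤ r+1, |f^{(j)}(x)| ≤ 1/ρ^j. -/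
/-- Derivative bounds from the Jacobian property: if `f` is `C^{r+1}` on an open
ball `B` of radius `ρ`, `rv(f⁽ʲ⁾)` is constant on `B`, each `f⁽ʲ⁾` has the
Jacobian property on `B`, and `|f| ≤ 1` on `B`, then `|f⁽ʲ⁾(x)| ≤ 1/ρ^j` on `B`
for `0 ≤ j ≤ r+1`. -/
theorem stmt_13 {K : Type*} [NontriviallyNormedField K]
    (hna : ∀ x y : K, ‖x + y‖ ≤ max ‖x‖ ‖y‖)
    (f : K → K) (r : ℕ) (x0 : K) (ρ : ℝ) (hρ : 0 < ρ)
    (B : Set K) (hB : B = {x : K | ‖x - x0‖ < ρ})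
    (hf : ContDiffOn K (r + 1) f B)
    (hrv : ∀ j ≤ r + 1, ∀ x ∈ B, ∀ y ∈ B,
      iteratedDeriv j f x = iteratedDeriv j f y ∨
      ‖iteratedDeriv j f x - iteratedDeriv j f y‖ < ‖iteratedDeriv j f x‖)
    (hjac : ∀ j ≤ r, ∀ (b : K) (ρ' : ℝ), 0 < ρ' → {y : K | ‖y - b‖ < ρ'} ⊆ B →
      (∃ z : K, iteratedDeriv j f '' {y : K | ‖y - b‖ < ρ'} = {z}) ∨
      (∀ x ∈ B, ∃ z : K, iteratedDeriv j f '' {y : K | ‖y - b‖ < ρ'}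
          = {w : K | ‖w - z‖ < ‖iteratedDeriv (j + 1) f x‖ * ρ'}))
    (hbd : ∀ x ∈ B, ‖f x‖ ≤ 1) :
    ∀ j ≤ r + 1, ∀ x ∈ B, ‖iteratedDeriv j f x‖ ≤ 1 / ρ ^ j := by
  subst hB
  -- B is open
  have hBopen : IsOpen {x : K | ‖x - x0‖ < ρ} := by
    have : Continuous fun x : K => ‖x - x0‖ := (continuous_id.sub continuous_const).norm
    exact isOpen_lt this continuous_const
  intro j
  induction j with
  | zero =>
    intro _ x hx
    simpa using hbd x hx
  | succ j ih =>
    intro hj x hx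
    have hjr : j ≤ r := by omega
    have ihx : ‖iteratedDeriv j f x‖ ≤ 1 / ρ ^ j := ih (by omega) x hx
    set c := iteratedDeriv j f x with hc
    set g := iteratedDeriv (j + 1) f x with hg
    have hBsub : {y : K | ‖y - x0‖ < ρ} ⊆ {x : K | ‖x - x0‖ < ρ} := subset_rfl
    rcases hjac j hjr x0 ρ hρ hBsub with ⟨z, hz⟩ | hball
    · -- singleton case: j-th derivative is constant on B, so (j+1)-st vanishes
      have hev : iteratedDeriv j f =ᶠ[nhds x] fun _ => z := by
        filter_upwards [hBopen.mem_nhds hx] with y hy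
        have : iteratedDeriv j f y ∈ iteratedDeriv j f '' {y : K | ‖y - x0‖ < ρ} :=
          Set.mem_image_of_mem _ hy
        rw [hz] at this
        exact this
      have : iteratedDeriv (j + 1) f x = 0 := by
        rw [iteratedDeriv_succ, hev.deriv_eq, deriv_const]
      rw [← hg] at this
      rw [this]
      simp [norm_nonneg]
      positivity
    · obtain ⟨z, himg⟩ := hball x hx
      by_cases hg0 : g = 0
      · rw [hg0]
        simp
        positivity
      have hR : 0 < ‖g‖ * ρ := mul_pos (norm_pos_iff.2 hg0) hρ
      -- key: every nonzero a of norm < ‖g‖ρ has norm < ‖c‖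
      have key : ∀ a : K, 0 < ‖a‖ → ‖a‖ < ‖g‖ * ρ → ‖a‖ < ‖c‖ := by
        intro a ha0 haR
        have hzmem : z ∈ iteratedDeriv j f '' {y : K | ‖y - x0‖ < ρ} := by
          rw [himg]; simp [hR]; exact hR
        have hzamem : z + a ∈ iteratedDeriv j f '' {y : K | ‖y - x0‖ < ρ} := by
          rw [himg]; simpa using haR
        obtain ⟨yv, hyv, hyveq⟩ := hzmem
        obtain ⟨yu, hyu, hyueq⟩ := hzamem
        have h2 := hrv j (by omega) yu hyu yv hyv
        rw [hyueq, hyveq] at h2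
        have haza : ‖a‖ < ‖z + a‖ := by
          rcases h2 with h2 | h2
          · exfalso
            have ha : a = 0 := by
              have := congrArg (fun t => t - z) h2
              simpa using this
            rw [ha, norm_zero] at ha0
            exact lt_irrefl _ ha0
          · simpa using h2
        have h1 := hrv j (by omega) x hx yu hyu
        rw [hyueq, ← hc] at h1
        have hnorm : ‖z + a‖ = ‖c‖ := by
          rcases h1 with h1 | h1
          · rw [← h1]
          · -- ‖c - (z+a)‖ < ‖c‖ ⇒ ‖z+a‖ = ‖c‖
            set u := z + a
            have hle : ‖u‖ ≤ ‖c‖ := by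
              have := hna c (u - c)
              simp only [add_sub_cancel] at this
              have h1' : ‖u - c‖ < ‖c‖ := by
                rw [← norm_neg]; simpa [neg_sub] using h1
              exact this.trans (max_le le_rfl h1'.le)
            have hge : ‖c‖ ≤ ‖u‖ := by
              have := hna u (c - u)
              simp only [add_sub_cancel] at this
              rcases le_max_iff.1 this with h | h
              · exact h
              · exfalso; linarith [norm_sub_rev c u, norm_sub_rev u c]
            linarith
        linarith [haza, hnorm.le]
      -- c ≠ 0
      have hc0 : c ≠ 0 := by
        intro h
        obtain ⟨t, ht0, htρ⟩ := NormedField.exists_norm_lt K hρ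
        have := key (g * t) (by rw [norm_mul]; exact mul_pos (norm_pos_iff.2 hg0) ht0)
          (by rw [norm_mul]; exact mul_lt_mul_of_pos_left htρ (norm_pos_iff.2 hg0))
        rw [h] at this
        simp at this
        nlinarith [norm_pos_iff.2 hg0]
      -- ‖g‖ρ ≤ ‖c‖
      have hRc : ‖g‖ * ρ ≤ ‖c‖ := by
        by_contra h
        push_neg at h
        exact absurd (key c (norm_pos_iff.2 hc0) h) (lt_irrefl _)
      have : ‖g‖ * ρ ≤ 1 / ρ ^ j := hRc.trans ihx
      rw [pow_succ, le_div_iff₀ (by positivity : (0:ℝ) < ρ ^ j * ρ)]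
      rw [le_div_iff₀ (by positivity : (0:ℝ) < ρ ^ j)] at this
      nlinarith
end
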